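/- For a partial 1-cocycle f, the tensor product Q_f ⊗_R Q_{f⁻¹} is a free R-module of rank one generated by ξ = ∑_{i=1}^m f̂(x_i) ⊗ f⁻¹-tilde(y_i), where x_i, y_i is a partial Galois coordinate system; hence Q_f ⊗_R Q_{f⁻¹} ≅ R. -/
import Mathlib


/-- A unital partial action of a group `G` on a commutative ring `S`.
The unital ideal `S_g` is `S * e g` where `e g` is a central idempotent,
and `act g` is the partial isomorphism `α_g` (extended to all of `S` by
first multiplying by the identity `e g⁻¹` of its domain ideal). -/
structure PartialAction (G : Type*) [Group G] (S : Type*) [CommRing S] where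
  e : G → S
  act : G → S → S
  e_idem : ∀ g, e g * e g = e g
  e_one : e 1 = 1
  act_one : ∀ x, act 1 x = x
  act_add : ∀ g x y, act g (x + y) = act g x + act g y
  act_mul : ∀ g x y, act g (x * y) = act g x * act g y
  act_restrict : ∀ g x, act g (x * e g⁻¹) = act g x
  act_mem : ∀ g x, act g x * e g = act g x
  act_e : ∀ g, act g (e g⁻¹) = e g
  act_inter : ∀ g h, act g (e g⁻¹ * e h) = e g * e (g * h)
  act_comp : ∀ g h x, act g (act h x * e g⁻¹) = act (g * h) (x * e h⁻¹) * e g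
  act_inv : ∀ g x, act g⁻¹ (act g (x * e g⁻¹)) = x * e g⁻¹

namespace PartialAction

variable {G : Type*} [Group G] {S : Type*} [CommRing S] (P : PartialAction G S)

/-- The subring of subinvariants `S^α`. -/
def invariants : Set S := {a | ∀ g : G, P.act g (a * P.e g⁻¹) = a * P.e g}

/-- `S ⊇ R` is a partial Galois extension: `R = S^α` and there is a
partial Galois coordinate system. -/
def IsPartialGalois [Fintype G] [DecidableEq G] (R : Subring S) : Prop :=
  ((R : Set S) = P.invariants) ∧
    ∃ m : ℕ, ∃ x y : Fin m → S, ∀ g : G,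
      (∑ i : Fin m, x i * P.act g (y i * P.e g⁻¹)) = if g = 1 then 1 else 0

/-- A partial 1-cocycle with values in `S`: `f g` is invertible in the
unital ideal `S e g` with inverse `finv g`, and the cocycle identity holds. -/
structure Cocycle where
  f : G → S
  finv : G → S
  f_mem : ∀ g, f g * P.e g = f g
  finv_mem : ∀ g, finv g * P.e g = finv g
  f_mul_finv : ∀ g, f g * finv g = P.e g
  cocycle : ∀ g h, f (g * h) * P.e g = f g * P.act g (f h * P.e g⁻¹)

variable {P}

theorem act_zero (g : G) : P.act g 0 = 0 := by
  have := P.act_add g 0 0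
  simpa using this.symm

/-- The set `Q_f = {a ∈ S : α_g(a 1_{g⁻¹}) = f(g) a for all g}` attached to a map `f : G → S`. -/
def Qset (P : PartialAction G S) (f : G → S) : Set S :=
  {a | ∀ g : G, P.act g (a * P.e g⁻¹) = f g * a}

/-- `Q_f` as an `R`-submodule of `S`, where `R` is a subring of invariants. -/
def Qmod (P : PartialAction G S) (R : Subring S)
    (hR : ∀ r ∈ R, ∀ g : G, P.act g (r * P.e g⁻¹) = r * P.e g)
    (f : G → S) : Submodule R S where
  carrier := Qset P f
  zero_mem' := by
    intro g
    simp [Qset, act_zero]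
  add_mem' := by
    intro a b ha hb g
    have := P.act_add g (a * P.e g⁻¹) (b * P.e g⁻¹)
    rw [Qset] at *
    rw [add_mul, this, ha g, hb g, mul_add]
  smul_mem' := by
    intro c x hx g
    have hc : (c : S) ∈ (R : Set S) := c.2
    have hcx : c • x = (c : S) * x := Subring.smul_def c x
    have hx' : ∀ g : G, P.act g (x * P.e g⁻¹) = f g * x := hx
    rw [hcx]
    have h1 : P.act g ((c : S) * x * P.e g⁻¹) = P.act g ((c : S)) * P.act g x := by
      rw [P.act_restrict, P.act_mul]
    have h2 : P.act g ((c : S)) = (c : S) * P.e g := by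
      rw [← P.act_restrict g (c : S), hR c c.2 g]
    have h3 : P.act g x = f g * x := by
      rw [← P.act_restrict g x]; exact hx' g
    have h4 : (f g * x) * P.e g = f g * x := by
      have := P.act_mem g (x * P.e g⁻¹)
      rw [P.act_restrict, h3] at this
      exact this
    rw [h1, h2, h3]
    have h5 : (c : S) * P.e g * (f g * x) = (c : S) * (f g * x * P.e g) := by ring
    rw [h5, h4]
    ring

end PartialAction

namespace PartialAction


variable {G : Type*} [Group G] {S : Type*} [CommRing S] (P : PartialAction G S)

/-- `act g` as an additive monoid hom. -/
def actHom (g : G) : S →+ S where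
  toFun := P.act g
  map_zero' := act_zero g
  map_add' := P.act_add g

lemma act_sum {ι : Type*} (g : G) (t : Finset ι) (F : ι → S) :
    P.act g (∑ i ∈ t, F i) = ∑ i ∈ t, P.act g (F i) :=
  map_sum (P.actHom g) F t

lemma key_sum {G : Type*} [CommGroup G] [Fintype G] [DecidableEq G]
    {S : Type*} [CommRing S] (P : PartialAction G S) (c : P.Cocycle)
    (m : ℕ) (x y : Fin m → S)
    (hcoord : ∀ g : G, (∑ i : Fin m, x i * P.act g (y i * P.e g⁻¹)) =
      if g = 1 then 1 else 0)
    (w : S) (hw : (∑ g : G, P.act g (w * P.e g⁻¹)) = 1) :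
    (∑ i : Fin m, (∑ g : G, c.finv g * P.act g (w * x i * P.e g⁻¹)) *
      (∑ h : G, c.f h * P.act h (y i * P.e h⁻¹))) = 1 := by
  have step2 : ∀ g h : G,
      (∑ i : Fin m, P.act g (w * x i * P.e g⁻¹) * P.act h (y i * P.e h⁻¹))
        = if h = g then P.act g (w * P.e g⁻¹) else 0 := by
    intro g h
    set k := g⁻¹ * h with hk
    have hgk : g * k = h := mul_inv_cancel_left g h
    have hkinv : h * k⁻¹ = g := by
      rw [hk, mul_inv_rev, inv_inv, mul_inv_cancel_left]
    have step1 : ∀ i, P.act g (w * x i * P.e g⁻¹) * P.act h (y i * P.e h⁻¹)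
        = P.act g (w * (x i * P.act k (y i * P.e k⁻¹)) * P.e g⁻¹) := by
      intro i
      have h1 : P.act h (y i * P.e k⁻¹)
          = P.act h (y i * P.e h⁻¹) * (P.e h * P.e g) := by
        rw [← P.act_restrict h (y i * P.e k⁻¹),
          show y i * P.e k⁻¹ * P.e h⁻¹ = (y i * P.e h⁻¹) * (P.e h⁻¹ * P.e k⁻¹) by
            linear_combination (- (y i * P.e k⁻¹)) * P.e_idem h⁻¹,
          P.act_mul, P.act_inter, hkinv]
      have h2 : P.act h (y i * P.e h⁻¹) * P.e g
          = P.act g (P.act k (y i * P.e k⁻¹) * P.e g⁻¹) := by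
        have hc := P.act_comp g k (y i)
        rw [hgk] at hc
        rw [P.act_restrict k (y i), hc, h1,
          show P.act h (y i * P.e h⁻¹) * (P.e h * P.e g) * P.e g
            = (P.act h (y i * P.e h⁻¹) * P.e h) * (P.e g * P.e g) by ring,
          P.act_mem, P.e_idem]
      calc P.act g (w * x i * P.e g⁻¹) * P.act h (y i * P.e h⁻¹)
          = P.act g (w * x i * P.e g⁻¹) * (P.act h (y i * P.e h⁻¹) * P.e g) := by
            rw [show P.act g (w * x i * P.e g⁻¹) * (P.act h (y i * P.e h⁻¹) * P.e g)
              = (P.act g (w * x i * P.e g⁻¹) * P.e g) * P.act h (y i * P.e h⁻¹) by ring,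
              P.act_mem]
        _ = P.act g (w * x i * P.e g⁻¹) * P.act g (P.act k (y i * P.e k⁻¹) * P.e g⁻¹) := by
            rw [h2]
        _ = P.act g ((w * x i * P.e g⁻¹) * (P.act k (y i * P.e k⁻¹) * P.e g⁻¹)) :=
            (P.act_mul g _ _).symm
        _ = P.act g (w * (x i * P.act k (y i * P.e k⁻¹)) * P.e g⁻¹) := by
            congr 1
            linear_combination (w * x i * P.act k (y i * P.e k⁻¹)) * P.e_idem g⁻¹
    rw [Finset.sum_congr rfl (fun i _ => step1 i), ← P.act_sum,
      show (∑ i : Fin m, w * (x i * P.act k (y i * P.e k⁻¹)) * P.e g⁻¹)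
        = w * (∑ i : Fin m, x i * P.act k (y i * P.e k⁻¹)) * P.e g⁻¹ by
          rw [Finset.mul_sum, Finset.sum_mul],
      hcoord k]
    by_cases hgh : h = g
    · subst hgh
      simp [hk]
    · have : ¬ (k = 1) := by
        rw [hk, inv_mul_eq_one]
        exact fun e => hgh e.symm
      rw [if_neg this, if_neg hgh, mul_zero, zero_mul, act_zero]
  calc (∑ i : Fin m, (∑ g : G, c.finv g * P.act g (w * x i * P.e g⁻¹)) *
      (∑ h : G, c.f h * P.act h (y i * P.e h⁻¹)))
      = ∑ i : Fin m, ∑ g : G, ∑ h : G, (c.finv g * c.f h) *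
          (P.act g (w * x i * P.e g⁻¹) * P.act h (y i * P.e h⁻¹)) := by
        refine Finset.sum_congr rfl fun i _ => ?_
        rw [Finset.sum_mul_sum]
        exact Finset.sum_congr rfl fun g _ => Finset.sum_congr rfl fun h _ => by ring
    _ = ∑ g : G, ∑ h : G, ∑ i : Fin m, (c.finv g * c.f h) *
          (P.act g (w * x i * P.e g⁻¹) * P.act h (y i * P.e h⁻¹)) := by
        rw [Finset.sum_comm]
        exact Finset.sum_congr rfl fun g _ => Finset.sum_comm
    _ = ∑ g : G, ∑ h : G, (c.finv g * c.f h) *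
          ∑ i : Fin m, P.act g (w * x i * P.e g⁻¹) * P.act h (y i * P.e h⁻¹) := by
        refine Finset.sum_congr rfl fun g _ => Finset.sum_congr rfl fun h _ => ?_
        rw [Finset.mul_sum]
    _ = ∑ g : G, (c.finv g * c.f g) * P.act g (w * P.e g⁻¹) := by
        refine Finset.sum_congr rfl fun g _ => ?_
        simp only [step2, mul_ite, mul_zero]
        rw [Finset.sum_ite_eq' Finset.univ g]
        simp
    _ = ∑ g : G, P.act g (w * P.e g⁻¹) := by
        refine Finset.sum_congr rfl fun g _ => ?_
        rw [mul_comm (c.finv g), c.f_mul_finv, mul_comm, P.act_mem]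
    _ = 1 := hw



lemma mul_mem_R {G : Type*} [Group G] [Fintype G] [DecidableEq G]
    {S : Type*} [CommRing S] (P : PartialAction G S) (R : Subring S)
    (hGal : P.IsPartialGalois R) (c ci : P.Cocycle)
    (hinv : ∀ g : G, ci.f g = c.finv g)
    (a b : S) (ha : a ∈ Qset P c.f) (hb : b ∈ Qset P ci.f) : a * b ∈ R := by
  have hmem : a * b ∈ P.invariants := by
    intro g
    have : a * b * P.e g⁻¹ = (a * P.e g⁻¹) * (b * P.e g⁻¹) := by
      linear_combination (- (a * b)) * P.e_idem g⁻¹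
    rw [this, P.act_mul, ha g, hb g, hinv g,
      show c.f g * a * (c.finv g * b) = (c.f g * c.finv g) * (a * b) by ring,
      c.f_mul_finv]
    ring
  rw [← hGal.1] at hmem
  exact hmem

end PartialAction

set_option maxHeartbeats 1000000
set_option synthInstance.maxHeartbeats 400000


open TensorProduct in
/-- `Q_f ⊗_R Q_{f⁻¹}` is free of rank one, generated by
`ξ = ∑ᵢ f̂(xᵢ) ⊗ (f⁻¹)~(yᵢ)`; hence `Q_f ⊗_R Q_{f⁻¹} ≅ R`. -/
theorem Qmod_tensor_inv_free {G : Type*} [CommGroup G] [Fintype G] [DecidableEq G]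
    {S : Type*} [CommRing S] (P : PartialAction G S) (R : Subring S)
    (hR : ∀ r ∈ R, ∀ g : G, P.act g (r * P.e g⁻¹) = r * P.e g)
    (hGal : P.IsPartialGalois R)
    (m : ℕ) (x y : Fin m → S)
    (hcoord : ∀ g : G, (∑ i : Fin m, x i * P.act g (y i * P.e g⁻¹)) =
      if g = 1 then 1 else 0)
    (w : S) (hw : (∑ g : G, P.act g (w * P.e g⁻¹)) = 1)
    (c ci : P.Cocycle) (hinv : ∀ g : G, ci.f g = c.finv g)
    (Fhat Gtilde : S → S)
    (hFhat : ∀ z, Fhat z = ∑ g : G, c.finv g * P.act g (w * z * P.e g⁻¹))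
    (hGtilde : ∀ z, Gtilde z = ∑ g : G, c.f g * P.act g (z * P.e g⁻¹))
    (ha : ∀ i, Fhat (x i) ∈ PartialAction.Qmod P R hR c.f)
    (hb : ∀ i, Gtilde (y i) ∈ PartialAction.Qmod P R hR ci.f) :
    Submodule.span R
        {(∑ i : Fin m,
          (⟨Fhat (x i), ha i⟩ : PartialAction.Qmod P R hR c.f) ⊗ₜ[R]
            (⟨Gtilde (y i), hb i⟩ : PartialAction.Qmod P R hR ci.f))} = ⊤ ∧
      Nonempty ((PartialAction.Qmod P R hR c.f ⊗[R] PartialAction.Qmod P R hR ci.f)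
        ≃ₗ[R] R) := by
  classical
  set Qf := PartialAction.Qmod P R hR c.f with hQf
  set Qg := PartialAction.Qmod P R hR ci.f with hQg
  have memR : ∀ (a : Qf) (b : Qg), (a : S) * (b : S) ∈ R := fun a b =>
    PartialAction.mul_mem_R P R hGal c ci hinv _ _ a.2 b.2
  have key' : (∑ i : Fin m, Fhat (x i) * Gtilde (y i)) = 1 := by
    simp only [hFhat, hGtilde]
    exact PartialAction.key_sum P c m x y hcoord w hw
  set ξ : Qf ⊗[R] Qg := ∑ i : Fin m,
      (⟨Fhat (x i), ha i⟩ : Qf) ⊗ₜ[R] (⟨Gtilde (y i), hb i⟩ : Qg) with hξ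
  -- the multiplication bilinear map
  let B : Qf →ₗ[R] Qg →ₗ[R] R := LinearMap.mk₂ R
    (fun a b => (⟨(a : S) * (b : S), memR a b⟩ : R))
    (fun a a' b => by ext; push_cast; ring)
    (fun r a b => by
      refine Subtype.ext ?_
      show ((r • a : Qf) : S) * (b : S) = (r : S) * ((a : S) * (b : S))
      rw [Submodule.coe_smul r a, Subring.smul_def]
      simp only [smul_eq_mul]
      ring)
    (fun a b b' => by ext; push_cast; ring)
    (fun r a b => by
      refine Subtype.ext ?_
      show ((a : S)) * ((r • b : Qg) : S) = (r : S) * ((a : S) * (b : S))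
      rw [Submodule.coe_smul r b, Subring.smul_def]
      simp only [smul_eq_mul]
      ring)
  let μ : Qf ⊗[R] Qg →ₗ[R] R := TensorProduct.lift B
  have hμtmul : ∀ (a : Qf) (b : Qg), μ (a ⊗ₜ[R] b) = ⟨(a : S) * (b : S), memR a b⟩ :=
    fun a b => rfl
  have hμξ : μ ξ = 1 := by
    rw [hξ, map_sum]
    ext
    push_cast
    simp only [hμtmul]
    exact_mod_cast key'
  let φ : R →ₗ[R] Qf ⊗[R] Qg := LinearMap.toSpanSingleton R _ ξ
  have hφ : ∀ r : R, φ r = r • ξ := fun r => rfl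
  have hcomp2 : ∀ t : Qf ⊗[R] Qg, μ t • ξ = t := by
    have main : ∀ (a : Qf) (b : Qg), μ (a ⊗ₜ[R] b) • ξ = a ⊗ₜ[R] b := by
      intro a b
      set r : R := ⟨(a : S) * (b : S), memR a b⟩ with hr
      have hμab : μ (a ⊗ₜ[R] b) = r := rfl
      have hadecomp : a = ∑ i : Fin m,
          ((⟨(a : S) * Gtilde (y i),
            PartialAction.mul_mem_R P R hGal c ci hinv _ _ a.2 (hb i)⟩ : R) •
            (⟨Fhat (x i), ha i⟩ : Qf) : Qf) := by
        ext
        rw [AddSubmonoidClass.coe_finset_sum]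
        simp only [SetLike.val_smul, Subring.smul_def, smul_eq_mul]
        rw [show (∑ i : Fin m, (a : S) * Gtilde (y i) * Fhat (x i))
            = (a : S) * ∑ i : Fin m, Fhat (x i) * Gtilde (y i) by
              rw [Finset.mul_sum]; exact Finset.sum_congr rfl fun i _ => by ring,
          key', mul_one]
      calc μ (a ⊗ₜ[R] b) • ξ
          = ∑ i : Fin m, (⟨Fhat (x i), ha i⟩ : Qf) ⊗ₜ[R]
              (r • (⟨Gtilde (y i), hb i⟩ : Qg)) := by
            rw [hμab, hξ, Finset.smul_sum]
            exact Finset.sum_congr rfl fun i _ => by rw [TensorProduct.tmul_smul]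
        _ = ∑ i : Fin m, (⟨Fhat (x i), ha i⟩ : Qf) ⊗ₜ[R]
              ((⟨(a : S) * Gtilde (y i),
                PartialAction.mul_mem_R P R hGal c ci hinv _ _ a.2 (hb i)⟩ : R) • b) := by
            refine Finset.sum_congr rfl fun i _ => ?_
            congr 1
            ext
            simp only [SetLike.val_smul, Subring.smul_def, smul_eq_mul, hr]
            ring
        _ = a ⊗ₜ[R] b := by
            conv_rhs => rw [hadecomp, TensorProduct.sum_tmul]
            exact Finset.sum_congr rfl fun i _ => (TensorProduct.smul_tmul _ _ _).symm
    intro t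
    induction t using TensorProduct.induction_on with
    | zero => simp
    | tmul a b => exact main a b
    | add u v hu hv => rw [map_add, add_smul, hu, hv]
  constructor
  · rw [eq_top_iff]
    intro t _
    rw [← hcomp2 t]
    exact Submodule.smul_mem _ _ (Submodule.mem_span_singleton_self ξ)
  · refine ⟨LinearEquiv.ofLinear μ φ ?_ ?_⟩
    · refine LinearMap.ext fun r => ?_
      rw [LinearMap.comp_apply, LinearMap.id_apply, hφ, map_smul, hμξ, smul_eq_mul,
        mul_one]
    · refine LinearMap.ext fun t => ?_
      rw [LinearMap.comp_apply, LinearMap.id_apply, hφ]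
      exact hcomp2 t
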